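/- The softmax function z ↦ softmax(z) on ℝⁿ is 1-Lipschitz from the ℓ∞ norm to the ℓ∞ norm: for all z, z' ∈ ℝⁿ, ‖softmax(z) − softmax(z')‖_∞ ≤ ‖z − z'‖_∞. Consequently, with temperature T > 0, ‖softmax(S/T) − softmax(S'/T)‖_∞ ≤ (1/T)‖S − S'‖_∞. -/

import Mathlib

/-!
The Jacobian of softmax at `z` is `J = diag p - p pᵀ` with `p = softmax z`. Row `i` of `J` applied
to `v` is `pᵢ ∑ⱼ pⱼ (vᵢ - vⱼ)`; the `j = i` term vanishes and the other weights sum to `1 - pᵢ`, so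
it is bounded by `2 pᵢ (1 - pᵢ) ‖v‖∞ ≤ ‖v‖∞`. Hence `‖J‖ ≤ 1` for the operator norm of the sup
norm, and the mean value inequality makes softmax 1-Lipschitz. The temperature version follows by
rescaling.
-/

noncomputable def softmax {n : ℕ} (z : Fin n → ℝ) : Fin n → ℝ :=
  fun i => Real.exp (z i) / ∑ j, Real.exp (z j)

open ContinuousLinearMap

lemma abs_sub_sum_mul_le {ι : Type*} [Fintype ι] {p : ι → ℝ} (hp : ∀ j, 0 ≤ p j)
    (hp1 : ∑ j, p j = 1) (v : ι → ℝ) (i : ι) :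
    |v i - ∑ j, p j * v j| ≤ 2 * (1 - p i) * ‖v‖ := by
  classical
  have hdiff (j : ι) : |v i - v j| ≤ 2 * ‖v‖ := by
    have hi := norm_le_pi_norm v i
    have hj := norm_le_pi_norm v j
    rw [Real.norm_eq_abs] at hi hj
    linarith [abs_sub (v i) (v j)]
  have hmean : v i - ∑ j, p j * v j = ∑ j ∈ Finset.univ.erase i, p j * (v i - v j) := by
    rw [Finset.sum_erase _ (by simp)]
    simp only [mul_sub, Finset.sum_sub_distrib, ← Finset.sum_mul, hp1, one_mul]
  calc |v i - ∑ j, p j * v j|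
      ≤ ∑ j ∈ Finset.univ.erase i, p j * |v i - v j| := by
        rw [hmean]
        refine (Finset.abs_sum_le_sum_abs _ _).trans_eq (Finset.sum_congr rfl fun j _ => ?_)
        rw [abs_mul, abs_of_nonneg (hp j)]
    _ ≤ ∑ j ∈ Finset.univ.erase i, p j * (2 * ‖v‖) :=
        Finset.sum_le_sum fun j _ => mul_le_mul_of_nonneg_left (hdiff j) (hp j)
    _ = 2 * (1 - p i) * ‖v‖ := by
        rw [← Finset.sum_mul, Finset.sum_erase_eq_sub (Finset.mem_univ i), hp1]
        ring

section Softmax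

variable {n : ℕ}

lemma softmax_nonneg (z : Fin n → ℝ) (i : Fin n) : 0 ≤ softmax z i := by
  unfold softmax
  positivity

lemma sum_softmax [NeZero n] (z : Fin n → ℝ) : ∑ i, softmax z i = 1 := by
  have hS : 0 < ∑ j, Real.exp (z j) :=
    Finset.sum_pos (fun j _ => Real.exp_pos _) Finset.univ_nonempty
  simp only [softmax, ← Finset.sum_div, div_self hS.ne']

noncomputable def softmaxJacobian (z : Fin n → ℝ) : (Fin n → ℝ) →L[ℝ] (Fin n → ℝ) :=
  pi fun i => softmax z i • (proj i - ∑ j, softmax z j • proj j)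

lemma softmaxJacobian_apply (z v : Fin n → ℝ) (i : Fin n) :
    softmaxJacobian z v i = softmax z i * (v i - ∑ j, softmax z j * v j) := by
  simp [softmaxJacobian]

lemma hasFDerivAt_softmax (z : Fin n → ℝ) : HasFDerivAt softmax (softmaxJacobian z) z := by
  refine hasFDerivAt_pi.2 fun i => ?_
  have hS : ∑ j, Real.exp (z j) ≠ 0 :=
    (Finset.sum_pos (fun j _ => Real.exp_pos _) ⟨i, Finset.mem_univ i⟩).ne'
  have hsum : HasFDerivAt (fun x : Fin n → ℝ => ∑ j, Real.exp (x j))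
      (∑ j, Real.exp (z j) • proj j) z :=
    HasFDerivAt.fun_sum fun j _ => (hasFDerivAt_apply j z).exp
  refine ((hasFDerivAt_apply i z).exp.mul
    ((hasDerivAt_inv hS).comp_hasFDerivAt z hsum)).congr_fderiv ?_
  ext v
  simp only [softmax, add_apply, neg_smul, smul_neg, neg_apply, smul_apply, sub_apply, sum_apply,
    proj_apply, smul_eq_mul, Function.comp_apply, div_mul_eq_mul_div, ← Finset.sum_div]
  field_simp
  ring

lemma norm_softmaxJacobian_le_one (z : Fin n → ℝ) : ‖softmaxJacobian z‖ ≤ 1 := by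
  refine opNorm_le_bound _ zero_le_one fun v =>
    (pi_norm_le_iff_of_nonneg (by positivity)).2 fun i => ?_
  have := NeZero.of_pos i.pos
  have hp := softmax_nonneg z i
  have hmean := abs_sub_sum_mul_le (softmax_nonneg z) (sum_softmax z) v i
  rw [Real.norm_eq_abs, softmaxJacobian_apply, abs_mul, abs_of_nonneg hp, one_mul]
  calc softmax z i * |v i - ∑ j, softmax z j * v j|
      ≤ softmax z i * (2 * (1 - softmax z i) * ‖v‖) := mul_le_mul_of_nonneg_left hmean hp
    _ ≤ ‖v‖ := by
        nlinarith [norm_nonneg v, mul_nonneg (norm_nonneg v) (sq_nonneg (2 * softmax z i - 1))]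

lemma lipschitzWith_one_softmax : LipschitzWith 1 (softmax (n := n)) := by
  rw [← lipschitzOnWith_univ]
  exact convex_univ.lipschitzOnWith_of_nnnorm_hasFDerivWithin_le
    (fun z _ => (hasFDerivAt_softmax z).hasFDerivWithinAt)
    fun z _ => by exact_mod_cast norm_softmaxJacobian_le_one z

end Softmax

theorem stmt_9 {n : ℕ} :
    (∀ z z' : Fin n → ℝ, ‖softmax z - softmax z'‖ ≤ ‖z - z'‖) ∧
    (∀ T : ℝ, 0 < T → ∀ S S' : Fin n → ℝ,
      ‖softmax (fun i => S i / T) - softmax (fun i => S' i / T)‖ ≤ (1 / T) * ‖S - S'‖) := by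
  have lipschitz (z z' : Fin n → ℝ) : ‖softmax z - softmax z'‖ ≤ ‖z - z'‖ := by
    simpa using lipschitzWith_one_softmax.norm_sub_le z z'
  refine ⟨lipschitz, fun T hT S S' => ?_⟩
  have hscale : (fun i => S i / T) - (fun i => S' i / T) = T⁻¹ • (S - S') := by
    ext i
    simp only [Pi.sub_apply, Pi.smul_apply, smul_eq_mul]
    ring
  calc _ ≤ ‖(fun i => S i / T) - (fun i => S' i / T)‖ := lipschitz _ _
    _ = (1 / T) * ‖S - S'‖ := by
        rw [hscale, norm_smul, Real.norm_eq_abs, abs_inv, abs_of_pos hT, one_div]
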